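/- Let V ⊆ ℝ² be open, let g : V → ℝ^N be a smooth immersion, let Z be a smooth vector field on V with α_g(x)(Z x, Z x) = 0 for every x, and let h : V → ℝ^N be a smooth map with range Dh(x) ⊆ N_x g for every x. Then for every x ∈ V, the directional derivative at x in the direction Z(x) of the map y ↦ Dh(y)(Z(y)) is orthogonal to the tangent space T_x g = range Dg(x). -/

import Mathlib

/-!
Differentiating `⟪Dh(y) a, Dg(y) b⟫ = 0` in the direction `w` gives
`⟪Dh a, D²g(w, b)⟫ + ⟪D²h(w, a), Dg b⟫ = 0`. For an asymptotic `Z` the vector `D²g(Z, Z)` is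
tangent, so the instance `(a, b, w) = (Y, Z, Z)` yields `⟪D²h(Z, Y), Dg Z⟫ = 0`; with the symmetry
of both second derivatives, the instances `(Z, Z, Y)` and `(Z, Y, Z)` then give
`⟪D²h(Z, Z), Dg Y⟫ = 0`. The other term `Dh(DZ(Z))` of `∂_Z (Dh(Z))` is normal by assumption.
-/

noncomputable section

open scoped RealInnerProductSpace
open Module Set

/-- Euclidean space ℝ^k. -/
abbrev Euc (k : ℕ) : Type := EuclideanSpace ℝ (Fin k)

variable {E : Type*} [NormedAddCommGroup E] [NormedSpace ℝ E] {m : ℕ}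

/-- Tangent space of an immersion at a point: range of the differential. -/
def TangentSp (f : E → Euc m) (x : E) : Submodule ℝ (Euc m) :=
  LinearMap.range (fderiv ℝ f x).toLinearMap

/-- Normal space: orthogonal complement of the tangent space. -/
def NormalSp (f : E → Euc m) (x : E) : Submodule ℝ (Euc m) := (TangentSp f x)ᗮ

/-- Orthogonal projection of the ambient space onto the normal space. -/
def normalProj (f : E → Euc m) (x : E) : Euc m →L[ℝ] Euc m :=
  (NormalSp f x).subtypeL.comp (Submodule.orthogonalProjectionOnto (NormalSp f x))

/-- Orthogonal projection of the ambient space onto the tangent space. -/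
def tangentProj (f : E → Euc m) (x : E) : Euc m →L[ℝ] Euc m :=
  (TangentSp f x).subtypeL.comp (Submodule.orthogonalProjectionOnto (TangentSp f x))

/-- The second fundamental form as a continuous linear operator in the first variable,
with second argument `Y` fixed. -/
def sffOp (f : E → Euc m) (x : E) (Y : E) : E →L[ℝ] Euc m :=
  (normalProj f x).comp (fderiv ℝ (fun y => fderiv ℝ f y Y) x)

/-- The second fundamental form `α_f(x)(X,Y)`: normal component of the second derivative. -/
def sff (f : E → Euc m) (x : E) (X Y : E) : Euc m := sffOp f x Y X

/-- Relative nullity subspace `Δ_f(x) = {X : α_f(x)(X,Y)=0 for all Y}`. -/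
def relNullity (f : E → Euc m) (x : E) : Submodule ℝ E :=
  ⨅ Y : E, LinearMap.ker (sffOp f x Y).toLinearMap

/-- `f` is a smooth immersion on `U`. -/
def IsImmersionOn (f : E → Euc m) (U : Set E) : Prop :=
  ContDiffOn ℝ (⊤ : ℕ∞) f U ∧ ∀ x ∈ U, Function.Injective (fderiv ℝ f x)

/-- `f` and `g` induce the same metric on `U`. -/
def SameMetricOn {m' : ℕ} (f : E → Euc m) (g : E → Euc m') (U : Set E) : Prop :=
  ∀ x ∈ U, ∀ X Y : E,
    ⟪fderiv ℝ f x X, fderiv ℝ f x Y⟫ = ⟪fderiv ℝ g x X, fderiv ℝ g x Y⟫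

/-- First normal space: span of the values of the second fundamental form. -/
def FirstNormal (f : E → Euc m) (x : E) : Submodule ℝ (Euc m) :=
  Submodule.span ℝ {v | ∃ X Y : E, v = sff f x X Y}

/-- `f` has rank two: the relative nullity has codimension two everywhere on `U`. -/
def HasRankTwo (f : E → Euc m) (U : Set E) : Prop :=
  ∀ x ∈ U, finrank ℝ (relNullity f x) = finrank ℝ E - 2

/-- A parabolic submanifold: rank two, first normal space equal to the normal space,
and a nowhere-vanishing smooth asymptotic vector field orthogonal to the relative nullity. -/
def IsParabolic (f : E → Euc m) (U : Set E) : Prop :=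
  IsImmersionOn f U ∧ HasRankTwo f U ∧
  (∀ x ∈ U, FirstNormal f x = NormalSp f x) ∧
  ∃ Z : E → E, ContDiffOn ℝ (⊤ : ℕ∞) Z U ∧ (∀ x ∈ U, Z x ≠ 0) ∧
    (∀ x ∈ U, ∀ T ∈ relNullity f x, ⟪fderiv ℝ f x (Z x), fderiv ℝ f x T⟫ = 0) ∧
    (∀ x ∈ U, sff f x (Z x) (Z x) = 0)

/-- `F` is ruled on `V`: there is a smooth corank-one distribution whose leaves are
mapped into affine subspaces. -/
def IsRuledOn (F : E → Euc m) (V : Set E) : Prop :=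
  ∃ D : E → Submodule ℝ E,
    (∀ x ∈ V, finrank ℝ (D x) = finrank ℝ E - 1) ∧
    (∀ x ∈ V, ∃ W : Set E, IsOpen W ∧ x ∈ W ∧ W ⊆ V ∧
      ∃ v : Fin (finrank ℝ E - 1) → E → E,
        (∀ i, ContDiffOn ℝ (⊤ : ℕ∞) (v i) W) ∧
        ∀ y ∈ W, D y = Submodule.span ℝ (Set.range fun i => v i y)) ∧
    (∀ S T : E → E, ContDiffOn ℝ (⊤ : ℕ∞) S V → ContDiffOn ℝ (⊤ : ℕ∞) T V →
      (∀ y ∈ V, S y ∈ D y) → (∀ y ∈ V, T y ∈ D y) →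
      ∀ x ∈ V, fderiv ℝ (fun y => fderiv ℝ F y (T y)) x (S x) ∈
        (D x).map (fderiv ℝ F x).toLinearMap)

/-- A two-dimensional immersed surface contained in the subspace `W`. -/
def IsImmersedSurfaceIn (S : Set (Euc m)) (W : Submodule ℝ (Euc m)) : Prop :=
  ∃ (O : Set (Euc 2)) (σ : Euc 2 → Euc m), IsOpen O ∧ ContDiffOn ℝ (⊤ : ℕ∞) σ O ∧
    (∀ x ∈ O, Function.Injective (fderiv ℝ σ x)) ∧ (∀ x ∈ O, σ x ∈ W) ∧ S = σ '' O

/-- `f` is surface-like on `V`. -/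
def SurfaceLikeOn {n : ℕ} (f : Euc n → Euc m) (V : Set (Euc n)) : Prop :=
  (∃ (W : Submodule ℝ (Euc m)) (p : Euc m) (S : Set (Euc m)),
      finrank ℝ W = 4 ∧ IsImmersedSurfaceIn S W ∧
      ∀ x ∈ V, ∃ s ∈ S, ∃ w ∈ Wᗮ, f x = p + s + w)
  ∨ (∃ (W : Submodule ℝ (Euc m)) (p : Euc m) (S : Set (Euc m)),
      finrank ℝ W = 5 ∧ IsImmersedSurfaceIn S W ∧ (∀ s ∈ S, ‖s‖ = 1) ∧
      ∀ x ∈ V, ∃ t : ℝ, 0 < t ∧ ∃ s ∈ S, ∃ w ∈ Wᗮ, f x = p + t • s + w)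

/-- `f` and `g` are congruent on `U` by a rigid motion of the ambient space. -/
def CongruentOn {n : ℕ} (f g : Euc n → Euc m) (U : Set (Euc n)) : Prop :=
  ∃ (A : Euc m ≃ₗᵢ[ℝ] Euc m) (v : Euc m), ∀ x ∈ U, g x = A (f x) + v

open Filter Topology

section SecondDerivative

variable {F G H : Type*} [NormedAddCommGroup F] [NormedSpace ℝ F]
  [NormedAddCommGroup G] [NormedSpace ℝ G] [NormedAddCommGroup H] [InnerProductSpace ℝ H]

theorem ContDiffAt.differentiableAt_fderiv {f : E → F} {x : E} (hf : ContDiffAt ℝ 2 f x) :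
    DifferentiableAt ℝ (fderiv ℝ f) x :=
  (hf.fderiv_right (m := 1) le_rfl).differentiableAt one_ne_zero

theorem fderiv_clm_apply_const_apply {c : E → F →L[ℝ] G} {x : E} (hc : DifferentiableAt ℝ c x)
    (a : F) (v : E) : fderiv ℝ (fun y => c y a) x v = fderiv ℝ c x v a := by
  simp [fderiv_clm_apply hc (differentiableAt_const a)]

theorem inner_fderiv_add_inner_fderiv_eq_zero {f₁ f₂ : E → H} {x : E}
    (h₁ : DifferentiableAt ℝ (fderiv ℝ f₁) x) (h₂ : DifferentiableAt ℝ (fderiv ℝ f₂) x)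
    (horth : ∀ᶠ y in 𝓝 x, ∀ a b, ⟪fderiv ℝ f₁ y a, fderiv ℝ f₂ y b⟫ = 0) (a b w : E) :
    ⟪fderiv ℝ f₁ x a, fderiv ℝ (fderiv ℝ f₂) x w b⟫ +
      ⟪fderiv ℝ (fderiv ℝ f₁) x w a, fderiv ℝ f₂ x b⟫ = 0 := by
  have hconst : (fun y => ⟪fderiv ℝ f₁ y a, fderiv ℝ f₂ y b⟫) =ᶠ[𝓝 x] fun _ => (0 : ℝ) :=
    horth.mono fun y hy => hy a b
  have := fderiv_inner_apply (𝕜 := ℝ) (h₁.clm_apply (differentiableAt_const a))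
    (h₂.clm_apply (differentiableAt_const b)) w
  rwa [hconst.fderiv_eq, fderiv_const_apply, fderiv_clm_apply_const_apply h₁,
    fderiv_clm_apply_const_apply h₂, eq_comm] at this

theorem inner_eq_zero_of_inner_add_inner_eq_zero {α : Type*} {A B : α → H} {S T : α → α → H}
    (hS : ∀ v w, S v w = S w v) (hT : ∀ v w, T v w = T w v)
    (hST : ∀ a b w, ⟪A a, T w b⟫ + ⟪S w a, B b⟫ = 0) {z : α} (hz : ∀ a, ⟪A a, T z z⟫ = 0)
    (y : α) : ⟪S z z, B y⟫ = 0 := by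
  have h₁ := hST y z z
  have h₂ := hST z z y
  have h₃ := hST z y z
  rw [hT y z, hS y z] at h₂
  linarith [hz y]

end SecondDerivative

theorem mem_normalSp_iff {f : E → Euc m} {x : E} {v : Euc m} :
    v ∈ NormalSp f x ↔ ∀ X, ⟪fderiv ℝ f x X, v⟫ = 0 := by
  simp [NormalSp, TangentSp, Submodule.mem_orthogonal]

theorem normalProj_eq_zero_iff {f : E → Euc m} {x : E} {v : Euc m} :
    normalProj f x v = 0 ↔ v ∈ TangentSp f x := by
  rw [normalProj, ContinuousLinearMap.comp_apply, Submodule.subtypeL_apply,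
    ZeroMemClass.coe_eq_zero, Submodule.orthogonalProjectionOnto_eq_zero_iff, NormalSp,
    Submodule.orthogonal_orthogonal]

theorem sff_eq_normalProj {f : E → Euc m} {x : E} (hf : DifferentiableAt ℝ (fderiv ℝ f) x)
    (X Y : E) : sff f x X Y = normalProj f x (fderiv ℝ (fderiv ℝ f) x X Y) := by
  rw [sff, sffOp, ContinuousLinearMap.comp_apply, fderiv_clm_apply_const_apply hf]

/-- If `Z` is an asymptotic field of an immersed surface `g` and `h`
has normal-valued differential, then `∂_Z (h_* Z)` is orthogonal to the tangent spaces
of `g`: the identity `(∇̃_Z h_*(Z))_{TL} = 0`. -/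
theorem derivative_of_normal_map_along_asymptotic_is_normal
    {N : ℕ} (V : Set (Euc 2)) (hVo : IsOpen V)
    (g : Euc 2 → Euc N) (hg : IsImmersionOn g V)
    (Z : Euc 2 → Euc 2) (hZs : ContDiffOn ℝ (⊤ : ℕ∞) Z V)
    (hZa : ∀ x ∈ V, sff g x (Z x) (Z x) = 0)
    (h : Euc 2 → Euc N) (hh : ContDiffOn ℝ (⊤ : ℕ∞) h V)
    (hhn : ∀ x ∈ V, ∀ X : Euc 2, fderiv ℝ h x X ∈ NormalSp g x) :
    ∀ x ∈ V, fderiv ℝ (fun y => fderiv ℝ h y (Z y)) x (Z x) ∈ NormalSp g x := by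
  intro x hx
  have hV : V ∈ 𝓝 x := hVo.mem_nhds hx
  have hh₂ : ContDiffAt ℝ 2 h x := (hh.contDiffAt hV).of_le (WithTop.coe_le_coe.2 le_top)
  have hg₂ : ContDiffAt ℝ 2 g x := (hg.1.contDiffAt hV).of_le (WithTop.coe_le_coe.2 le_top)
  have horth : ∀ᶠ y in 𝓝 x, ∀ a b, ⟪fderiv ℝ h y a, fderiv ℝ g y b⟫ = 0 :=
    mem_of_superset hV fun y hy a b =>
      Submodule.inner_left_of_mem_orthogonal (LinearMap.mem_range_self _ b) (hhn y hy a)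
  have hZZ_tangent : fderiv ℝ (fderiv ℝ g) x (Z x) (Z x) ∈ TangentSp g x := by
    rw [← normalProj_eq_zero_iff, ← sff_eq_normalProj hg₂.differentiableAt_fderiv]
    exact hZa x hx
  have hZZ_orth : ∀ a, ⟪fderiv ℝ h x a, fderiv ℝ (fderiv ℝ g) x (Z x) (Z x)⟫ = 0 := fun a =>
    Submodule.inner_left_of_mem_orthogonal hZZ_tangent (hhn x hx a)
  rw [fderiv_clm_apply hh₂.differentiableAt_fderiv
    ((hZs.contDiffAt hV).differentiableAt (by simp))]
  refine add_mem (hhn x hx _) (mem_normalSp_iff.2 fun y => ?_)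
  rw [real_inner_comm]
  exact inner_eq_zero_of_inner_add_inner_eq_zero
    (hh₂.isSymmSndFDerivAt (by simp)) (hg₂.isSymmSndFDerivAt (by simp))
    (inner_fderiv_add_inner_fderiv_eq_zero hh₂.differentiableAt_fderiv
      hg₂.differentiableAt_fderiv horth) hZZ_orth y

end
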